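/- arXiv:0708.2462 — 2 statements merged into one kernel-verified Lean document; each statement's English description precedes it below -/
import Mathlib

section
/- Let G be an (αn, δc)-expander (c,d)-regular bipartite graph, with δc an integer, and let U ⊆ X be a set of left vertices with |U ∪ U̇| < αn, where U̇ = {v ∉ U : |Γ(v) ∩ Γ(U)| ≥ (1−λ)c + 1} and λc is an integer with λ < δ. Then there exists a set M of edges such that every vertex of U ∪ U̇ is incident with at least δc edges of M and every vertex of Γ(U ∪ U̇) is incident with at most one edge of M. -/
/-!
Blow up every vertex of `U ∪ U̇` into `δc` copies, each adjacent to the neighbours of the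
original vertex. A set `S` of copies lives over at most `|S| / δc` original vertices, whose
neighbourhood has size at least `δc` times their number by expansion (as `|U ∪ U̇| < αn`);
so Hall's condition holds and the copies can be matched injectively into `Y`. The edges
`(v, f(copy of v))` then form the required matching.
-/

open Finset
open scoped Classical

section MultiMatching

variable {X Y : Type*} [Fintype Y] (E : X → Y → Prop)

noncomputable def neighbors (T : Finset X) : Finset Y := univ.filter fun y => ∃ x ∈ T, E x y

variable {E}

theorem exists_injective_copies_of_hall {W : Finset X} {D : ℕ}
    (hall : ∀ T ⊆ W, D * #T ≤ #(neighbors E T)) :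
    ∃ f : W × Fin D → Y, Function.Injective f ∧ ∀ a, E a.1 (f a) := by
  let t : W × Fin D → Finset Y := fun a => univ.filter (E a.1)
  suffices hHall : ∀ S : Finset (W × Fin D), #S ≤ #(S.biUnion t) by
    obtain ⟨f, hf_inj, hf⟩ := (all_card_le_biUnion_card_iff_exists_injective t).mp hHall
    exact ⟨f, hf_inj, fun a => (mem_filter.mp (hf a)).2⟩
  intro S
  let T : Finset X := S.image fun a => a.1.1
  have hT_sub : T ⊆ W := by
    simp only [T, image_subset_iff]
    exact fun a _ => a.1.2
  have hfibers : ∀ v ∈ T, #{a ∈ S | a.1.1 = v} ≤ D := fun v _ => by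
    simpa using card_le_card_of_injOn (t := univ) (fun a : W × Fin D => a.2)
      (fun _ _ => mem_univ _)
      (fun a ha b hb hab => Prod.ext (Subtype.ext <| by
        rw [(mem_filter.mp ha).2, (mem_filter.mp hb).2]) hab)
  have hnbhd : neighbors E T ⊆ S.biUnion t := by
    intro y hy
    obtain ⟨x, hx, hxy⟩ := (mem_filter.mp hy).2
    obtain ⟨a, ha, rfl⟩ := mem_image.mp hx
    exact mem_biUnion.mpr ⟨a, ha, mem_filter.mpr ⟨mem_univ y, hxy⟩⟩
  calc #S ≤ D * #T := card_le_mul_card_image S D hfibers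
    _ ≤ #(neighbors E T) := hall T hT_sub
    _ ≤ #(S.biUnion t) := card_le_card hnbhd

theorem exists_multiMatching_of_hall {W : Finset X} {D : ℕ}
    (hall : ∀ T ⊆ W, D * #T ≤ #(neighbors E T)) :
    ∃ M : Finset (X × Y), (∀ p ∈ M, E p.1 p.2) ∧
      (∀ v ∈ W, D ≤ #(M.filter fun p => p.1 = v)) ∧
      (∀ y : Y, #(M.filter fun p => p.2 = y) ≤ 1) := by
  obtain ⟨f, hf_inj, hf⟩ := exists_injective_copies_of_hall hall
  refine ⟨univ.image fun a => (a.1.1, f a), ?_, ?_, ?_⟩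
  · simp only [mem_image, mem_univ, true_and]
    rintro _ ⟨a, rfl⟩
    exact hf a
  · intro v hv
    simpa using card_le_card_of_injOn (s := univ) (fun i : Fin D => (v, f (⟨v, hv⟩, i)))
      (fun i _ => mem_filter.mpr ⟨mem_image.mpr ⟨(⟨v, hv⟩, i), mem_univ _, rfl⟩, rfl⟩)
      (fun i _ j _ hij => (Prod.ext_iff.mp (hf_inj (Prod.ext_iff.mp hij).2)).2)
  · intro y
    refine card_le_one.mpr fun p hp q hq => ?_
    obtain ⟨⟨a, -, rfl⟩, hay⟩ := And.imp_left mem_image.mp (mem_filter.mp hp)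
    obtain ⟨⟨b, -, rfl⟩, hby⟩ := And.imp_left mem_image.mp (mem_filter.mp hq)
    rw [hf_inj (hay.trans hby.symm)]

end MultiMatching

theorem stmt_7_general {X Y : Type*} [Fintype X] [Fintype Y]
    (E : X → Y → Prop) (c n : ℕ) (α δ : ℝ) (D : ℕ)
    (hexp : ∀ U : Finset X, (U.card : ℝ) < α * n →
      (δ * c * U.card : ℝ) ≤ ((Finset.univ.filter (fun y => ∃ x ∈ U, E x y)).card : ℝ))
    (hD : (D : ℝ) = δ * c)
    (U : Finset X)
    (Udot : Finset X)
    (hsize : ((U ∪ Udot).card : ℝ) < α * n) :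
    ∃ M : Finset (X × Y), (∀ p ∈ M, E p.1 p.2) ∧
      (∀ v ∈ U ∪ Udot, D ≤ (M.filter (fun p => p.1 = v)).card) ∧
      (∀ y : Y, (∃ v ∈ U ∪ Udot, E v y) → (M.filter (fun p => p.2 = y)).card ≤ 1) := by
  have hall : ∀ T ⊆ U ∪ Udot, D * #T ≤ #(neighbors E T) := fun T hT => by
    have hT_small : (#T : ℝ) < α * n := (Nat.cast_le.mpr (card_le_card hT)).trans_lt hsize
    exact_mod_cast (show (D * #T : ℝ) ≤ #(neighbors E T) from hD ▸ hexp T hT_small)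
  obtain ⟨M, hM_edges, hM_left, hM_right⟩ := exists_multiMatching_of_hall hall
  exact ⟨M, hM_edges, hM_left, fun y _ => hM_right y⟩

theorem stmt_7 {X Y : Type*} [Fintype X] [Fintype Y]
    (E : X → Y → Prop) (c d n : ℕ) (α δ lam : ℝ) (D L : ℕ)
    (hn : Fintype.card X = n)
    (hc : ∀ x : X, (Finset.univ.filter (fun y => E x y)).card = c)
    (hd : ∀ y : Y, (Finset.univ.filter (fun x => E x y)).card = d)
    (hexp : ∀ U : Finset X, (U.card : ℝ) < α * n →
      (δ * c * U.card : ℝ) ≤ ((Finset.univ.filter (fun y => ∃ x ∈ U, E x y)).card : ℝ))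
    (hD : (D : ℝ) = δ * c) (hL : (L : ℝ) = lam * c) (hlam : lam < δ)
    (U : Finset X)
    (Udot : Finset X)
    (hUdot : Udot = Finset.univ.filter (fun v => v ∉ U ∧
      ((1 - lam) * c + 1 ≤
        ((Finset.univ.filter (fun y => E v y ∧ ∃ u ∈ U, E u y)).card : ℝ))))
    (hsize : ((U ∪ Udot).card : ℝ) < α * n) :
    ∃ M : Finset (X × Y), (∀ p ∈ M, E p.1 p.2) ∧
      (∀ v ∈ U ∪ Udot, D ≤ (M.filter (fun p => p.1 = v)).card) ∧
      (∀ y : Y, (∃ v ∈ U ∪ Udot, E v y) → (M.filter (fun p => p.2 = y)).card ≤ 1) :=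
  stmt_7_general E c n α δ D hexp hD U Udot hsize
end

section
/- Let H be a binary r×n matrix with j ones per column and m ones per row, and let q ∈ ℝⁿ with q ≥ 0 satisfy, for each row i and each t with h_{it}=1: q_t ≤ Σ_{ℓ≠t: h_{iℓ}=1} q_ℓ. Then ‖H^T (Hq)‖² ≥ 4j² Σ_{t=1}^n q_t². -/
/-!
For fixed `t`, each of the `j` rows `i` with `h i t = 1` satisfies `(H q) i ≥ 2 q t` by the
pseudocodeword inequality, so `(Hᵀ H q) t ≥ 2 j q t ≥ 0`; squaring and summing over `t` gives
the bound.
-/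

open Finset Matrix
open scoped Classical

section PseudocodewordBound

variable {ι κ : Type*} [Fintype κ] [DecidableEq κ]

theorem two_mul_le_mulVec_apply_of_le_sum_erase {H : Matrix ι κ ℝ} {q : κ → ℝ} {i : ι} {t : κ}
    (hit : H i t = 1) (hpc : q t ≤ ∑ l ∈ univ.erase t, H i l * q l) :
    2 * q t ≤ (H *ᵥ q) i := by
  have hsplit : (H *ᵥ q) i = q t + ∑ l ∈ univ.erase t, H i l * q l := by
    rw [mulVec, dotProduct, ← add_sum_erase _ _ (mem_univ t), hit, one_mul]
  linarith

theorem two_mul_colSum_mul_le_transpose_mulVec_mulVec [Fintype ι] {H : Matrix ι κ ℝ}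
    (h01 : ∀ i t, H i t = 0 ∨ H i t = 1) {q : κ → ℝ}
    (hpc : ∀ i t, H i t = 1 → q t ≤ ∑ l ∈ univ.erase t, H i l * q l) (t : κ) :
    2 * (∑ i, H i t) * q t ≤ (Hᵀ *ᵥ (H *ᵥ q)) t := by
  have hrowwise : ∀ i, H i t * (2 * q t) ≤ H i t * (H *ᵥ q) i := fun i => by
    rcases h01 i t with h | h
    · simp [h]
    · simpa [h] using two_mul_le_mulVec_apply_of_le_sum_erase h (hpc i t h)
  calc 2 * (∑ i, H i t) * q t = ∑ i, H i t * (2 * q t) := by rw [← sum_mul]; ring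
    _ ≤ ∑ i, H i t * (H *ᵥ q) i := sum_le_sum fun i _ => hrowwise i
    _ = (Hᵀ *ᵥ (H *ᵥ q)) t := by simp only [mulVec, dotProduct, transpose_apply]

end PseudocodewordBound

theorem stmt_15_general (r n j : ℕ)
    (H : Matrix (Fin r) (Fin n) ℝ)
    (h01 : ∀ i t, H i t = 0 ∨ H i t = 1)
    (hcol : ∀ t, ∑ i, H i t = (j : ℝ))
    (q : Fin n → ℝ) (hq0 : ∀ i, 0 ≤ q i)
    (hpc : ∀ i t, H i t = 1 →
      q t ≤ ∑ l ∈ Finset.univ.erase t, H i l * q l) :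
    4 * (j : ℝ) ^ 2 * ∑ t, (q t) ^ 2 ≤ ∑ t, ((Hᵀ *ᵥ (H *ᵥ q)) t) ^ 2 := by
  have hpointwise : ∀ t, 2 * (j : ℝ) * q t ≤ (Hᵀ *ᵥ (H *ᵥ q)) t := fun t => by
    simpa only [hcol] using two_mul_colSum_mul_le_transpose_mulVec_mulVec h01 hpc t
  calc 4 * (j : ℝ) ^ 2 * ∑ t, (q t) ^ 2 = ∑ t, (2 * (j : ℝ) * q t) ^ 2 := by
        rw [mul_sum]; congr 1; ext t; ring
    _ ≤ ∑ t, ((Hᵀ *ᵥ (H *ᵥ q)) t) ^ 2 :=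
        sum_le_sum fun t _ => pow_le_pow_left₀ (by have := hq0 t; positivity) (hpointwise t) 2

theorem stmt_15 (r n j m : ℕ)
    (H : Matrix (Fin r) (Fin n) ℝ)
    (h01 : ∀ i t, H i t = 0 ∨ H i t = 1)
    (hcol : ∀ t, ∑ i, H i t = (j : ℝ))
    (hrow : ∀ i, ∑ t, H i t = (m : ℝ))
    (q : Fin n → ℝ) (hq0 : ∀ i, 0 ≤ q i)
    (hpc : ∀ i t, H i t = 1 →
      q t ≤ ∑ l ∈ Finset.univ.erase t, H i l * q l) :
    4 * (j : ℝ) ^ 2 * ∑ t, (q t) ^ 2 ≤ ∑ t, ((Hᵀ *ᵥ (H *ᵥ q)) t) ^ 2 :=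
  stmt_15_general r n j H h01 hcol q hq0 hpc
end
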